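/- arXiv:2104.04491 — 2 statements merged into one kernel-verified Lean document; each statement's English description precedes it below -/
import Mathlib

section
/- Let a_n(i,j) be the number of permutations of [n] avoiding {1243, 1324} with first letter i and second letter j. Then for 1 ≤ i ≤ n-3 and i+2 ≤ j ≤ n-1, a_n(i,j) = a_{n-1}(i,j) + Σ_{ℓ=1}^{i-1} a_{n-1}(ℓ, j-1). -/
/-- `π` contains the pattern `p` (given as the sequence of its values). -/
def ContainsPat {n k : ℕ} (π : Equiv.Perm (Fin n)) (p : Fin k → ℕ) : Prop :=
  ∃ f : Fin k → Fin n, StrictMono f ∧ ∀ a b : Fin k, p a < p b ↔ π (f a) < π (f b)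

/-- The first letter of `π` (one-line notation, values in `[n]`) is `i`. -/
def FirstIs {n : ℕ} (π : Equiv.Perm (Fin n)) (i : ℕ) : Prop :=
  ∀ j : Fin n, (j : ℕ) = 0 → (π j : ℕ) + 1 = i

/-- The second letter of `π` (one-line notation, values in `[n]`) is `i`. -/
def SecondIs {n : ℕ} (π : Equiv.Perm (Fin n)) (i : ℕ) : Prop :=
  ∀ j : Fin n, (j : ℕ) = 1 → (π j : ℕ) + 1 = i

/-- The number of permutations of `[n]` avoiding both patterns with first letter `i`
and second letter `j`. -/
noncomputable def a (n i j : ℕ) : ℕ :=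
  Nat.card {π : Equiv.Perm (Fin n) //
    ¬ ContainsPat π ![1, 2, 4, 3] ∧ ¬ ContainsPat π ![1, 3, 2, 4] ∧ FirstIs π i ∧ SecondIs π j}

/-!
Write `π = i j k ⋯`. Since `j + 1 ≤ n`, the letter `j + 1` stands to the right of `j`, so
`k = j + 1` or `k < i`: otherwise `i j k (j+1)` is an occurrence of `1324` (if `k < j`) or of
`1243` (if `k > j + 1`).

If `k = j + 1`, deleting `k` is a bijection onto the permutations counted by `a (n-1) i j`:
`j` and `j + 1` are adjacent both in position and in value, so an occurrence through `j + 1`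
can be rerouted through `j`, or through `i j`.

If `k = ℓ < i`, deleting `i` and exchanging the next two letters is a bijection onto the
permutations counted by `a (n-1) ℓ (j-1)`. Both patterns start with their smallest letter, so
the leading `i` of `i ℓ j ⋯` can always be replaced by the smaller `ℓ` right after it; and
exchanging `j` and `ℓ` only matters for occurrences `ℓ j c d` of `i ℓ j ⋯`, which are turned
into occurrences in `i j ℓ ⋯` using `i`, or the letter `i + 1`.
-/

open Equiv

lemma Fin.val_succAbove {m : ℕ} (p : Fin (m + 1)) (q : Fin m) :
    (p.succAbove q : ℕ) = if (q : ℕ) < p then (q : ℕ) else (q : ℕ) + 1 := by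
  unfold Fin.succAbove
  split_ifs <;> simp_all [Fin.lt_def]

lemma Fin.val_zero_one_two (n : ℕ) :
    ((0 : Fin (n + 3)) : ℕ) = 0 ∧ ((1 : Fin (n + 3)) : ℕ) = 1 ∧ ((2 : Fin (n + 3)) : ℕ) = 2 :=
  ⟨rfl, Fin.val_one _, Fin.val_two⟩

namespace Equiv.Perm

variable {m n : ℕ}

/-- In one-line notation: insert the letter `v` at position `x`, raising the letters `≥ v`
of `σ` by one. -/
def insertAt (σ : Perm (Fin m)) (x v : Fin (m + 1)) : Perm (Fin (m + 1)) :=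
  ((finSuccEquiv' x).trans (optionCongr σ)).trans (finSuccEquiv' v).symm

@[simp]
lemma insertAt_apply_self (σ : Perm (Fin m)) (x v : Fin (m + 1)) : σ.insertAt x v x = v := by
  simp [insertAt]

@[simp]
lemma insertAt_apply_succAbove (σ : Perm (Fin m)) (x v : Fin (m + 1)) (q : Fin m) :
    σ.insertAt x v (x.succAbove q) = v.succAbove (σ q) := by
  simp [insertAt]

lemma insertAt_injective (x v : Fin (m + 1)) :
    Function.Injective fun σ : Perm (Fin m) ↦ σ.insertAt x v := by
  intro σ τ h
  refine Equiv.ext fun q ↦ ?_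
  simpa using congrArg (· (x.succAbove q)) h

def deleteAt (π : Perm (Fin (m + 1))) (x : Fin (m + 1)) : Perm (Fin m) :=
  removeNone (((finSuccEquiv' x).symm.trans π).trans (finSuccEquiv' (π x)))

lemma succAbove_deleteAt_apply (π : Perm (Fin (m + 1))) (x : Fin (m + 1)) (q : Fin m) :
    (π x).succAbove (π.deleteAt x q) = π (x.succAbove q) := by
  obtain ⟨r, hr⟩ := Fin.exists_succAbove_eq (π.injective.ne (Fin.succAbove_ne x q))
  have h : (((finSuccEquiv' x).symm.trans π).trans (finSuccEquiv' (π x))) (some q) = some r := by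
    simp [← hr]
  have hq : π.deleteAt x q = r :=
    Option.some_injective _ (by rw [deleteAt, removeNone_some _ ⟨r, h⟩, h])
  rw [hq, hr]

lemma insertAt_deleteAt (π : Perm (Fin (m + 1))) (x : Fin (m + 1)) :
    (π.deleteAt x).insertAt x (π x) = π := by
  ext y
  rcases eq_or_ne y x with rfl | hy
  · simp
  · obtain ⟨q, rfl⟩ := Fin.exists_succAbove_eq hy
    simp [succAbove_deleteAt_apply]

lemma card_subtype_eq_card_insertAt {P : Perm (Fin (m + 1)) → Prop} (x v : Fin (m + 1))
    (hP : ∀ π, P π → π x = v) :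
    Nat.card {π // P π} = Nat.card {σ : Perm (Fin m) // P (σ.insertAt x v)} := by
  refine (Nat.card_eq_of_bijective (fun σ ↦ ⟨σ.1.insertAt x v, σ.2⟩) ⟨?_, ?_⟩).symm
  · exact fun σ τ h ↦ Subtype.ext (insertAt_injective x v (congrArg Subtype.val h))
  · rintro ⟨π, hπ⟩
    obtain rfl := hP π hπ
    exact ⟨⟨π.deleteAt x, by rwa [insertAt_deleteAt]⟩, Subtype.ext (insertAt_deleteAt π x)⟩

lemma card_subtype_eq_card_trans (P : Perm (Fin n) → Prop) (e : Perm (Fin n)) :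
    Nat.card {π // P π} = Nat.card {π // P (e.trans π)} :=
  Nat.card_congr ((Equiv.mulRight e).subtypeEquiv fun _ ↦ Iff.rfl).symm

lemma insertAt_zero_apply_one (σ : Perm (Fin (n + 1))) (v : Fin (n + 2)) :
    σ.insertAt 0 v 1 = v.succAbove (σ 0) := by
  simpa using σ.insertAt_apply_succAbove 0 v 0

lemma insertAt_zero_apply_two (σ : Perm (Fin (n + 2))) (v : Fin (n + 3)) :
    σ.insertAt 0 v 2 = v.succAbove (σ 1) := by
  simpa using σ.insertAt_apply_succAbove 0 v 1

lemma insertAt_apply_castSucc_of_lt (σ : Perm (Fin m)) {x : Fin (m + 1)} (v : Fin (m + 1))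
    {q : Fin m} (h : (q : ℕ) < x) : σ.insertAt x v q.castSucc = v.succAbove (σ q) := by
  rw [← Fin.succAbove_of_castSucc_lt x q h, insertAt_apply_succAbove]

lemma insertAt_two_apply_zero (σ : Perm (Fin (n + 2))) (v : Fin (n + 3)) :
    σ.insertAt 2 v 0 = v.succAbove (σ 0) :=
  σ.insertAt_apply_castSucc_of_lt v (x := 2) (q := 0) (by rw [Fin.val_two]; simp)

lemma insertAt_two_apply_one (σ : Perm (Fin (n + 2))) (v : Fin (n + 3)) :
    σ.insertAt 2 v 1 = v.succAbove (σ 1) :=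
  σ.insertAt_apply_castSucc_of_lt v (x := 2) (q := 1) (by rw [Fin.val_two, Fin.val_one]; simp)

lemma swap_one_two_trans_apply_zero (π : Perm (Fin (n + 3))) : (swap 1 2).trans π 0 = π 0 := by
  obtain ⟨v0, v1, v2⟩ := Fin.val_zero_one_two n
  simp [swap_apply_of_ne_of_ne (show (0 : Fin (n + 3)) ≠ 1 by omega)
    (show (0 : Fin (n + 3)) ≠ 2 by omega)]

lemma swap_one_two_trans_apply_of_two_lt (π : Perm (Fin (n + 3))) {x : Fin (n + 3)}
    (hx : 2 < x) : (swap 1 2).trans π x = π x := by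
  obtain ⟨v0, v1, v2⟩ := Fin.val_zero_one_two n
  simp [swap_apply_of_ne_of_ne (show x ≠ 1 by omega) (show x ≠ 2 by omega)]

end Equiv.Perm

open Equiv.Perm

def IsOccurrence {n k : ℕ} (π : Perm (Fin n)) (p : Fin k → ℕ) (f : Fin k → Fin n) : Prop :=
  StrictMono f ∧ ∀ a b, p a < p b ↔ π (f a) < π (f b)

section Occurrence

variable {m n k : ℕ} {p : Fin k → ℕ}

lemma isOccurrence_insertAt_comp_succAbove_iff {σ : Perm (Fin m)} {x v : Fin (m + 1)}
    {f : Fin k → Fin m} :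
    IsOccurrence (σ.insertAt x v) p (x.succAbove ∘ f) ↔ IsOccurrence σ p f := by
  simp only [IsOccurrence, StrictMono, Function.comp_apply, insertAt_apply_succAbove,
    Fin.succAbove_lt_succAbove_iff]

lemma containsPat_insertAt {σ : Perm (Fin m)} (h : ContainsPat σ p) (x v : Fin (m + 1)) :
    ContainsPat (σ.insertAt x v) p :=
  let ⟨f, hf⟩ := h
  ⟨x.succAbove ∘ f, isOccurrence_insertAt_comp_succAbove_iff.2 hf⟩

lemma containsPat_of_isOccurrence_insertAt {σ : Perm (Fin m)} {x v : Fin (m + 1)}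
    {f : Fin k → Fin (m + 1)} (hf : IsOccurrence (σ.insertAt x v) p f) (hx : ∀ t, f t ≠ x) :
    ContainsPat σ p := by
  choose g hg using fun t ↦ Fin.exists_succAbove_eq (hx t)
  obtain rfl : f = x.succAbove ∘ g := funext fun t ↦ (hg t).symm
  exact ⟨g, isOccurrence_insertAt_comp_succAbove_iff.1 hf⟩

lemma IsOccurrence.swap_trans {π : Perm (Fin n)} {f : Fin k → Fin n} (hf : IsOccurrence π p f)
    {x y : Fin n} (hxy : (y : ℕ) = x + 1) (h : (∀ t, f t ≠ x) ∨ ∀ t, f t ≠ y) :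
    IsOccurrence ((swap x y).trans π) p (swap x y ∘ f) := by
  refine ⟨fun a b hab ↦ ?_, fun a b ↦ by simpa [swap_apply_self] using hf.2 a b⟩
  have := hf.1 hab
  simp only [Function.comp_apply, swap_apply_def]
  rcases h with h | h <;> have := h a <;> have := h b <;> split_ifs <;> omega

lemma exists_isOccurrence_ne_zero {π : Perm (Fin (n + 2))} {p : Fin (k + 1) → ℕ}
    (hp : ∀ t ≠ 0, p 0 < p t) (hπ : π 1 < π 0) {f : Fin (k + 1) → Fin (n + 2)}
    (hf : IsOccurrence π p f) : ∃ g, IsOccurrence π p g ∧ ∀ t, g t ≠ 0 := by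
  by_cases h0 : f 0 = 0
  swap
  · exact ⟨f, hf, fun t ↦
      (lt_of_lt_of_le (Fin.pos_iff_ne_zero.2 h0) (hf.1.monotone (Fin.zero_le t))).ne'⟩
  have above : ∀ t ≠ 0, π 0 < π (f t) := fun t ht ↦ h0 ▸ (hf.2 0 t).1 (hp t ht)
  have far : ∀ t ≠ 0, 1 < f t := by
    intro t ht
    have h1 := hf.1 (Fin.pos_iff_ne_zero.2 ht)
    have h2 : f t ≠ 1 := fun h ↦ (above t ht).not_gt (h ▸ hπ)
    have := Fin.val_one n
    rw [h0] at h1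
    omega
  refine ⟨Function.update f 0 1, ⟨fun a b hab ↦ ?_, fun a b ↦ ?_⟩, fun t ↦ ?_⟩
  · have hb : b ≠ 0 := (lt_of_le_of_lt (Fin.zero_le a) hab).ne'
    rw [Function.update_of_ne hb]
    rcases eq_or_ne a 0 with rfl | ha
    · simpa using far b hb
    · simpa [Function.update_of_ne ha] using hf.1 hab
  · rcases eq_or_ne a 0 with rfl | ha <;> rcases eq_or_ne b 0 with rfl | hb
    · simp
    · simpa [Function.update_of_ne hb, hp b hb] using hπ.trans (above b hb)
    · simp only [Function.update_of_ne ha, Function.update_self]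
      exact iff_of_false (hp a ha).asymm (hπ.trans (above a ha)).asymm
    · simpa [Function.update_of_ne ha, Function.update_of_ne hb] using hf.2 a b
  · rcases eq_or_ne t 0 with rfl | ht
    · simp
    · rw [Function.update_of_ne ht]
      exact (Fin.zero_lt_one.trans (far t ht)).ne'

lemma containsPat_insertAt_zero_iff {σ : Perm (Fin (n + 1))} {v : Fin (n + 2)}
    (hv : (σ 0 : ℕ) < v) {p : Fin (k + 1) → ℕ} (hp : ∀ t ≠ 0, p 0 < p t) :
    ContainsPat (σ.insertAt 0 v) p ↔ ContainsPat σ p := by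
  refine ⟨fun ⟨f, hf⟩ ↦ ?_, fun h ↦ containsPat_insertAt h 0 v⟩
  have h10 : σ.insertAt 0 v 1 < σ.insertAt 0 v 0 := by
    rw [insertAt_zero_apply_one, insertAt_apply_self, Fin.lt_def, Fin.val_succAbove, if_pos hv]
    exact hv
  obtain ⟨g, hg, hg0⟩ := exists_isOccurrence_ne_zero hp h10 hf
  exact containsPat_of_isOccurrence_insertAt hg hg0

lemma containsPat_iff_exists_vec4 {π : Perm (Fin n)} {p : Fin 4 → ℕ} :
    ContainsPat π p ↔ ∃ a b c d, IsOccurrence π p ![a, b, c, d] := by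
  refine ⟨fun ⟨f, hf⟩ ↦ ⟨f 0, f 1, f 2, f 3, ?_⟩, fun ⟨a, b, c, d, h⟩ ↦ ⟨_, h⟩⟩
  rwa [show ![f 0, f 1, f 2, f 3] = f from funext fun t ↦ by fin_cases t <;> rfl]

lemma isOccurrence_1243_iff {π : Perm (Fin n)} {a b c d : Fin n} :
    IsOccurrence π ![1, 2, 4, 3] ![a, b, c, d] ↔
      a < b ∧ b < c ∧ c < d ∧ π a < π b ∧ π b < π d ∧ π d < π c := by
  simp only [IsOccurrence, Nat.succ_eq_add_one, Nat.reduceAdd, strictMono_vecCons, Fin.isValue,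
    Matrix.cons_val_zero, Matrix.cons_val_fin_one, strictMono_vecEmpty, and_true,
    Fin.forall_fin_succ, Order.lt_one_iff, Matrix.cons_val_succ, Order.lt_two_iff, forall_const,
    one_ne_zero, lt_self_iff_false, Std.le_refl, true_iff, Nat.one_lt_ofNat, true_and,
    OfNat.ofNat_ne_zero, false_iff, not_lt, Nat.not_ofNat_le_one, Nat.reduceLT, Nat.lt_add_one]
  constructor <;> intro h <;> omega

lemma isOccurrence_1324_iff {π : Perm (Fin n)} {a b c d : Fin n} :
    IsOccurrence π ![1, 3, 2, 4] ![a, b, c, d] ↔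
      a < b ∧ b < c ∧ c < d ∧ π a < π c ∧ π c < π b ∧ π b < π d := by
  simp only [IsOccurrence, Nat.succ_eq_add_one, Nat.reduceAdd, strictMono_vecCons, Fin.isValue,
    Matrix.cons_val_zero, Matrix.cons_val_fin_one, strictMono_vecEmpty, and_true,
    Fin.forall_fin_succ, Order.lt_one_iff, Matrix.cons_val_succ, Order.lt_two_iff, forall_const,
    one_ne_zero, lt_self_iff_false, Std.le_refl, true_iff, Nat.one_lt_ofNat, true_and,
    OfNat.ofNat_ne_zero, false_iff, not_lt, Nat.not_ofNat_le_one, Nat.reduceLT, Nat.lt_add_one]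
  constructor <;> intro h <;> omega

lemma containsPat_1243_iff {π : Perm (Fin n)} :
    ContainsPat π ![1, 2, 4, 3] ↔
      ∃ a b c d, a < b ∧ b < c ∧ c < d ∧ π a < π b ∧ π b < π d ∧ π d < π c := by
  simp only [containsPat_iff_exists_vec4, isOccurrence_1243_iff]

lemma containsPat_1324_iff {π : Perm (Fin n)} :
    ContainsPat π ![1, 3, 2, 4] ↔
      ∃ a b c d, a < b ∧ b < c ∧ c < d ∧ π a < π c ∧ π c < π b ∧ π b < π d := by
  simp only [containsPat_iff_exists_vec4, isOccurrence_1324_iff]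

lemma vec4_ne {α : Type*} {a b c d x : α} (h : a ≠ x ∧ b ≠ x ∧ c ≠ x ∧ d ≠ x) :
    ∀ t, ![a, b, c, d] t ≠ x := by
  obtain ⟨ha, hb, hc, hd⟩ := h
  intro t
  fin_cases t <;> assumption

lemma vec4_ne_or_vec4_ne {a b c d x y : Fin n} (hab : a < b) (hbc : b < c) (hcd : c < d)
    (hxy : (y : ℕ) = x + 1) (h1 : ¬(a = x ∧ b = y)) (h2 : ¬(b = x ∧ c = y))
    (h3 : ¬(c = x ∧ d = y)) :
    (∀ t, ![a, b, c, d] t ≠ x) ∨ ∀ t, ![a, b, c, d] t ≠ y :=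
  (by omega : (a ≠ x ∧ b ≠ x ∧ c ≠ x ∧ d ≠ x) ∨ (a ≠ y ∧ b ≠ y ∧ c ≠ y ∧ d ≠ y)).imp
    vec4_ne vec4_ne

end Occurrence

def Avoids1243And1324 {n : ℕ} (π : Perm (Fin n)) : Prop :=
  ¬ ContainsPat π ![1, 2, 4, 3] ∧ ¬ ContainsPat π ![1, 3, 2, 4]

section ThreeLetters

variable {n : ℕ} {π : Perm (Fin (n + 3))}

lemma apply_two_eq_or_lt_of_avoids (hπ : Avoids1243And1324 π) (h01 : π 0 < π 1)
    (hlt : (π 1 : ℕ) + 1 < n + 3) : (π 2 : ℕ) = π 1 + 1 ∨ π 2 < π 0 := by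
  obtain ⟨v0, v1, v2⟩ := Fin.val_zero_one_two n
  obtain ⟨y, hy⟩ : ∃ y, (π y : ℕ) = π 1 + 1 := ⟨π.symm ⟨_, hlt⟩, by simp⟩
  have h20 := π.injective.ne (show (2 : Fin (n + 3)) ≠ 0 by omega)
  have h21 := π.injective.ne (show (2 : Fin (n + 3)) ≠ 1 by omega)
  by_contra! h
  have hy0 : y ≠ 0 := by rintro rfl; omega
  have hy1 : y ≠ 1 := by rintro rfl; omega
  have hy2 : y ≠ 2 := by rintro rfl; omega
  rcases lt_or_gt_of_ne h21 with h2 | h2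
  · exact hπ.2 (containsPat_1324_iff.2 ⟨0, 1, 2, y, by omega⟩)
  · exact hπ.1 (containsPat_1243_iff.2 ⟨0, 1, 2, y, by omega⟩)

lemma exists_isOccurrence_1243_ne_two (h01 : π 0 < π 1) (h12 : (π 2 : ℕ) = π 1 + 1)
    (h : ContainsPat π ![1, 2, 4, 3]) : ∃ f, IsOccurrence π ![1, 2, 4, 3] f ∧ ∀ t, f t ≠ 2 := by
  obtain ⟨v0, v1, v2⟩ := Fin.val_zero_one_two n
  obtain ⟨a, b, c, d, hab, hbc, hcd, hπab, hπbd, hπdc⟩ := containsPat_1243_iff.1 h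
  rcases eq_or_ne a 2 with rfl | ha
  · exact ⟨![1, b, c, d], isOccurrence_1243_iff.2 ⟨by omega, hbc, hcd, by omega, hπbd, hπdc⟩,
      vec4_ne (by omega)⟩
  rcases eq_or_ne b 2 with rfl | hb
  · exact ⟨![0, 1, c, d], isOccurrence_1243_iff.2 ⟨by omega, by omega, hcd, h01, by omega, hπdc⟩,
      vec4_ne (by omega)⟩
  rcases eq_or_ne c 2 with rfl | hc
  · obtain rfl : b = 1 := by omega
    omega
  exact ⟨![a, b, c, d], isOccurrence_1243_iff.2 ⟨hab, hbc, hcd, hπab, hπbd, hπdc⟩,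
    vec4_ne ⟨ha, hb, hc, by omega⟩⟩

lemma exists_isOccurrence_1324_ne_two (h12 : (π 2 : ℕ) = π 1 + 1)
    (h : ContainsPat π ![1, 3, 2, 4]) : ∃ f, IsOccurrence π ![1, 3, 2, 4] f ∧ ∀ t, f t ≠ 2 := by
  obtain ⟨v0, v1, v2⟩ := Fin.val_zero_one_two n
  obtain ⟨a, b, c, d, hab, hbc, hcd, hπac, hπcb, hπbd⟩ := containsPat_1324_iff.1 h
  rcases eq_or_ne a 2 with rfl | ha
  · exact ⟨![1, b, c, d], isOccurrence_1324_iff.2 ⟨by omega, hbc, hcd, by omega, hπcb, hπbd⟩,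
      vec4_ne (by omega)⟩
  rcases eq_or_ne b 2 with rfl | hb
  · rcases eq_or_ne a 1 with rfl | ha1
    · omega
    obtain rfl : a = 0 := by omega
    have := π.injective.ne (show c ≠ 1 by omega)
    exact ⟨![0, 1, c, d],
      isOccurrence_1324_iff.2 ⟨by omega, by omega, hcd, hπac, by omega, by omega⟩,
      vec4_ne (by omega)⟩
  rcases eq_or_ne c 2 with rfl | hc
  · obtain rfl : b = 1 := by omega
    omega
  exact ⟨![a, b, c, d], isOccurrence_1324_iff.2 ⟨hab, hbc, hcd, hπac, hπcb, hπbd⟩,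
    vec4_ne ⟨ha, hb, hc, by omega⟩⟩

lemma containsPat_of_containsPat_swap_trans (h10 : π 1 < π 0) (h02 : π 0 < π 2) {k : ℕ}
    {p : Fin (k + 1) → ℕ} (hp : ∀ t ≠ 0, p 0 < p t) (h : ContainsPat ((swap 1 2).trans π) p) :
    ContainsPat π p := by
  obtain ⟨v0, v1, v2⟩ := Fin.val_zero_one_two n
  obtain ⟨f, (hf : IsOccurrence _ p f)⟩ := h
  suffices hf12 : (∀ t, f t ≠ 1) ∨ ∀ t, f t ≠ 2 by
    have := hf.swap_trans (by omega) hf12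
    rw [← trans_assoc, swap_swap, refl_trans] at this
    exact ⟨_, this⟩
  -- position 2 of `(swap 1 2).trans π` holds `π 1`, which is smaller than the two letters
  -- before it, so it cannot come after the first letter of an occurrence
  by_contra! hboth
  obtain ⟨⟨s, hs⟩, ⟨s', hs'⟩⟩ := hboth
  have hs'0 : s' ≠ 0 := by
    rintro rfl
    have := hf.1.monotone (Fin.zero_le s)
    omega
  have key := (hf.2 0 s').1 (hp s' hs'0)
  have hf0 : f 0 ≤ 1 := hs ▸ hf.1.monotone (Fin.zero_le s)
  have := swap_one_two_trans_apply_zero π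
  have : (swap 1 2).trans π 1 = π 2 := by simp
  have : (swap 1 2).trans π 2 = π 1 := by simp
  rw [hs'] at key
  rcases (by omega : f 0 = 0 ∨ f 0 = 1) with h0 | h0 <;> rw [h0] at key <;> omega

lemma containsPat_swap_trans_of_containsPat_1243 (h10 : π 1 < π 0) (h02 : π 0 < π 2)
    (h : ContainsPat π ![1, 2, 4, 3]) : ContainsPat ((swap 1 2).trans π) ![1, 2, 4, 3] := by
  obtain ⟨v0, v1, v2⟩ := Fin.val_zero_one_two n
  obtain ⟨a, b, c, d, hab, hbc, hcd, hπab, hπbd, hπdc⟩ := containsPat_1243_iff.1 h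
  by_cases h12 : a = 1 ∧ b = 2
  · obtain ⟨rfl, rfl⟩ := h12
    have := swap_one_two_trans_apply_zero π
    have := swap_one_two_trans_apply_of_two_lt π (show 2 < c by omega)
    have := swap_one_two_trans_apply_of_two_lt π (show 2 < d by omega)
    have : (swap 1 2).trans π 1 = π 2 := by simp
    exact containsPat_1243_iff.2 ⟨0, 1, c, d, by omega⟩
  have h12' : ¬(b = 1 ∧ c = 2) := by
    rintro ⟨rfl, rfl⟩
    obtain rfl : a = 0 := by omega
    omega
  exact ⟨_, (isOccurrence_1243_iff.2 ⟨hab, hbc, hcd, hπab, hπbd, hπdc⟩).swap_trans (by omega)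
    (vec4_ne_or_vec4_ne hab hbc hcd (by omega) h12 h12' (by omega))⟩

lemma containsPat_swap_trans_of_containsPat_1324 (h10 : π 1 < π 0)
    (h02 : (π 0 : ℕ) + 1 < π 2) (h : ContainsPat π ![1, 3, 2, 4]) :
    ContainsPat ((swap 1 2).trans π) ![1, 3, 2, 4] ∨
      ContainsPat ((swap 1 2).trans π) ![1, 2, 4, 3] := by
  obtain ⟨v0, v1, v2⟩ := Fin.val_zero_one_two n
  obtain ⟨a, b, c, d, hab, hbc, hcd, hπac, hπcb, hπbd⟩ := containsPat_1324_iff.1 h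
  by_cases h12 : a = 1 ∧ b = 2
  swap
  · have h12' : ¬(b = 1 ∧ c = 2) := by
      rintro ⟨rfl, rfl⟩
      obtain rfl : a = 0 := by omega
      omega
    exact .inl ⟨_, (isOccurrence_1324_iff.2 ⟨hab, hbc, hcd, hπac, hπcb, hπbd⟩).swap_trans
      (by omega) (vec4_ne_or_vec4_ne hab hbc hcd (by omega) h12 h12' (by omega))⟩
  obtain ⟨rfl, rfl⟩ := h12
  have := swap_one_two_trans_apply_zero π
  have := swap_one_two_trans_apply_of_two_lt π (show 2 < c by omega)
  have := swap_one_two_trans_apply_of_two_lt π (show 2 < d by omega)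
  have : (swap 1 2).trans π 1 = π 2 := by simp
  have : (swap 1 2).trans π 2 = π 1 := by simp
  rcases lt_or_gt_of_ne (π.injective.ne (show c ≠ 0 by omega)) with hc0 | hc0
  swap
  · exact .inl (containsPat_1324_iff.2 ⟨0, 1, c, d, by omega⟩)
  -- the value `π 0 + 1` lies right of position 2; where it sits relative to `d` decides
  -- which pattern it completes
  obtain ⟨w, hw⟩ : ∃ w, (π w : ℕ) = π 0 + 1 := ⟨π.symm ⟨π 0 + 1, by omega⟩, by simp⟩
  have hw2 : 2 < w := by
    by_contra! hw2
    rcases (by omega : w = 0 ∨ w = 1 ∨ w = 2) with rfl | rfl | rfl <;> omega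
  have := swap_one_two_trans_apply_of_two_lt π hw2
  rcases lt_or_gt_of_ne (show w ≠ d by rintro rfl; omega) with hwd | hwd
  · exact .inl (containsPat_1324_iff.2 ⟨0, 1, w, d, by omega⟩)
  · exact .inr (containsPat_1243_iff.2 ⟨2, c, d, w, by omega⟩)

end ThreeLetters

section Avoidance

variable {n : ℕ}

lemma avoids_insertAt_zero_iff {σ : Perm (Fin (n + 1))} {v : Fin (n + 2)} (hv : (σ 0 : ℕ) < v) :
    Avoids1243And1324 (σ.insertAt 0 v) ↔ Avoids1243And1324 σ := by
  unfold Avoids1243And1324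
  rw [containsPat_insertAt_zero_iff hv (by decide), containsPat_insertAt_zero_iff hv (by decide)]

lemma avoids_insertAt_two_iff {σ : Perm (Fin (n + 2))} {v : Fin (n + 3)} (h01 : σ 0 < σ 1)
    (hv : (v : ℕ) = σ 1 + 1) :
    Avoids1243And1324 (σ.insertAt 2 v) ↔ Avoids1243And1324 σ := by
  have e0 : (σ.insertAt 2 v 0 : ℕ) = σ 0 := by
    rw [insertAt_two_apply_zero, Fin.val_succAbove, if_pos (by omega)]
  have e1 : (σ.insertAt 2 v 1 : ℕ) = σ 1 := by
    rw [insertAt_two_apply_one, Fin.val_succAbove, if_pos (by omega)]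
  have h01' : σ.insertAt 2 v 0 < σ.insertAt 2 v 1 := by rw [Fin.lt_def, e0, e1]; exact h01
  have h12 : (σ.insertAt 2 v 2 : ℕ) = σ.insertAt 2 v 1 + 1 := by
    rw [insertAt_apply_self, e1, hv]
  refine ⟨fun ⟨h1, h2⟩ ↦ ⟨fun h ↦ h1 (containsPat_insertAt h 2 v),
    fun h ↦ h2 (containsPat_insertAt h 2 v)⟩, fun ⟨h1, h2⟩ ↦ ⟨fun h ↦ ?_, fun h ↦ ?_⟩⟩
  · obtain ⟨f, hf, hf2⟩ := exists_isOccurrence_1243_ne_two h01' h12 h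
    exact h1 (containsPat_of_isOccurrence_insertAt hf hf2)
  · obtain ⟨f, hf, hf2⟩ := exists_isOccurrence_1324_ne_two h12 h
    exact h2 (containsPat_of_isOccurrence_insertAt hf hf2)

lemma avoids_swap_trans_iff {π : Perm (Fin (n + 3))} (h10 : π 1 < π 0)
    (h02 : (π 0 : ℕ) + 1 < π 2) :
    Avoids1243And1324 ((swap 1 2).trans π) ↔ Avoids1243And1324 π := by
  have h02' : π 0 < π 2 := by omega
  refine ⟨fun ⟨h1, h2⟩ ↦ ⟨fun h ↦ h1 (containsPat_swap_trans_of_containsPat_1243 h10 h02' h),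
    fun h ↦ (containsPat_swap_trans_of_containsPat_1324 h10 h02 h).elim h2 h1⟩,
    fun ⟨h1, h2⟩ ↦ ⟨fun h ↦ h1 ?_, fun h ↦ h2 ?_⟩⟩ <;>
  exact containsPat_of_containsPat_swap_trans h10 h02' (by decide) h

lemma avoids_swap_trans_insertAt_zero_iff {σ : Perm (Fin (n + 2))} {v : Fin (n + 3)}
    (h0 : (σ 0 : ℕ) < v) (h1 : (v : ℕ) < σ 1) :
    Avoids1243And1324 ((swap 1 2).trans (σ.insertAt 0 v)) ↔ Avoids1243And1324 σ := by
  have e1 : (σ.insertAt 0 v 1 : ℕ) = σ 0 := by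
    rw [insertAt_zero_apply_one, Fin.val_succAbove, if_pos h0]
  have e2 : (σ.insertAt 0 v 2 : ℕ) = σ 1 + 1 := by
    rw [insertAt_zero_apply_two, Fin.val_succAbove, if_neg (by omega)]
  rw [avoids_swap_trans_iff (by rw [Fin.lt_def, e1, insertAt_apply_self]; exact h0)
    (by rw [e2, insertAt_apply_self]; omega), avoids_insertAt_zero_iff h0]

end Avoidance

lemma Nat.card_subtype_eq_sum_card_fiber {α : Type*} [Finite α] (P : α → Prop) (g : α → ℕ)
    (s : Finset ℕ) (h : ∀ x, P x → g x ∈ s) :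
    Nat.card {x // P x} = ∑ b ∈ s, Nat.card {x // P x ∧ g x = b} := by
  classical
  have := Fintype.ofFinite α
  simp only [Nat.card_eq_fintype_card, Fintype.card_subtype]
  rw [Finset.card_eq_sum_card_fiberwise (f := g) (t := s) (fun x hx ↦ h x (by simpa using hx))]
  simp [Finset.filter_filter]

section Counting

variable {n i j : ℕ}

lemma firstIs_iff {π : Perm (Fin (n + 1))} : FirstIs π i ↔ (π 0 : ℕ) + 1 = i :=
  ⟨fun h ↦ h 0 rfl, fun h x hx ↦ by rwa [show x = 0 from Fin.ext hx]⟩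

lemma secondIs_iff {π : Perm (Fin (n + 2))} : SecondIs π j ↔ (π 1 : ℕ) + 1 = j :=
  ⟨fun h ↦ h 1 (Fin.val_one n), fun h x hx ↦ by rwa [show x = 1 from Fin.ext (by simp [hx])]⟩

lemma a_eq_card : a n i j =
    Nat.card {π : Perm (Fin n) // Avoids1243And1324 π ∧ FirstIs π i ∧ SecondIs π j} :=
  Nat.card_congr (Equiv.subtypeEquivRight fun _ ↦ and_assoc.symm)

lemma card_fiber_third_eq_succ_second (hij : i < j) (hj : j ≤ n + 2) :
    Nat.card {π : Perm (Fin (n + 3)) //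
      (Avoids1243And1324 π ∧ FirstIs π i ∧ SecondIs π j) ∧ (π 2 : ℕ) + 1 = j + 1} =
      a (n + 2) i j := by
  obtain ⟨v, hv⟩ : ∃ v : Fin (n + 3), (v : ℕ) = j := ⟨⟨j, by omega⟩, rfl⟩
  rw [card_subtype_eq_card_insertAt 2 v fun π hπ ↦ Fin.ext (by omega), a_eq_card]
  refine Nat.card_congr (Equiv.subtypeEquivRight fun σ ↦ ?_)
  have e0 := congrArg Fin.val (σ.insertAt_two_apply_zero v)
  have e1 := congrArg Fin.val (σ.insertAt_two_apply_one v)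
  rw [Fin.val_succAbove] at e0 e1
  simp only [firstIs_iff, secondIs_iff, e0, e1, insertAt_apply_self, hv]
  constructor
  · rintro ⟨⟨hav, hF, hS⟩, -⟩
    have hF' : (σ 0 : ℕ) + 1 = i := by split_ifs at hF <;> omega
    have hS' : (σ 1 : ℕ) + 1 = j := by split_ifs at hS <;> omega
    exact ⟨(avoids_insertAt_two_iff (by omega) (by omega)).1 hav, hF', hS'⟩
  · rintro ⟨hav, hF, hS⟩
    refine ⟨⟨(avoids_insertAt_two_iff (by omega) (by omega)).2 hav, ?_, ?_⟩, trivial⟩ <;>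
    rw [if_pos (by omega)] <;> assumption

lemma card_fiber_third_eq_of_lt {ℓ : ℕ} (hℓi : ℓ < i) (hij : i + 2 ≤ j) (hj : j ≤ n + 2) :
    Nat.card {π : Perm (Fin (n + 3)) //
      (Avoids1243And1324 π ∧ FirstIs π i ∧ SecondIs π j) ∧ (π 2 : ℕ) + 1 = ℓ} =
      a (n + 2) ℓ (j - 1) := by
  obtain ⟨v, hv⟩ : ∃ v : Fin (n + 3), (v : ℕ) = i - 1 := ⟨⟨i - 1, by omega⟩, rfl⟩
  rw [card_subtype_eq_card_trans _ (swap 1 2), card_subtype_eq_card_insertAt 0 v ?_,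
    a_eq_card]
  · refine Nat.card_congr (Equiv.subtypeEquivRight fun σ ↦ ?_)
    have e1 := congrArg Fin.val (σ.insertAt_zero_apply_two v)
    have e2 := congrArg Fin.val (σ.insertAt_zero_apply_one v)
    rw [Fin.val_succAbove] at e1 e2
    simp only [firstIs_iff, secondIs_iff, swap_one_two_trans_apply_zero]
    simp only [trans_apply, swap_apply_left, swap_apply_right, e1, e2, insertAt_apply_self, hv]
    constructor
    · rintro ⟨⟨hav, -, hS⟩, hT⟩
      have hF' : (σ 0 : ℕ) + 1 = ℓ := by split_ifs at hT <;> omega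
      have hS' : (σ 1 : ℕ) + 1 = j - 1 := by split_ifs at hS <;> omega
      exact ⟨(avoids_swap_trans_insertAt_zero_iff (by omega) (by omega)).1 hav, hF', hS'⟩
    · rintro ⟨hav, hF, hS⟩
      refine ⟨⟨(avoids_swap_trans_insertAt_zero_iff (by omega) (by omega)).2 hav, by omega, ?_⟩,
        ?_⟩
      · rw [if_neg (by omega)]; omega
      · rw [if_pos (by omega)]; omega
  · intro π hπ
    have := firstIs_iff.1 hπ.1.2.1
    rw [swap_one_two_trans_apply_zero] at this
    exact Fin.ext (by omega)

lemma third_mem_of_avoids {π : Perm (Fin (n + 3))}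
    (hπ : Avoids1243And1324 π ∧ FirstIs π i ∧ SecondIs π j) (hij : i < j) (hj : j ≤ n + 2) :
    (π 2 : ℕ) + 1 ∈ insert (j + 1) (Finset.Icc 1 (i - 1)) := by
  obtain ⟨hav, hF, hS⟩ := hπ
  rw [firstIs_iff] at hF
  rw [secondIs_iff] at hS
  rw [Finset.mem_insert, Finset.mem_Icc]
  rcases apply_two_eq_or_lt_of_avoids hav (by omega) (by omega) with h | h <;> omega

end Counting

theorem stmt_11 :
    ∀ n i j, 1 ≤ i → i ≤ n - 3 → i + 2 ≤ j → j ≤ n - 1 →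
      a n i j = a (n - 1) i j + ∑ ℓ ∈ Finset.Icc 1 (i - 1), a (n - 1) ℓ (j - 1) := by
  intro n i j _ hin hij hjn
  obtain ⟨n, rfl⟩ : ∃ m, n = m + 3 := ⟨n - 3, by omega⟩
  rw [show n + 3 - 1 = n + 2 by omega, a_eq_card,
    Nat.card_subtype_eq_sum_card_fiber _ (fun π ↦ (π 2 : ℕ) + 1) _
      fun π hπ ↦ third_mem_of_avoids hπ (by omega) (by omega),
    Finset.sum_insert (by rw [Finset.mem_Icc]; omega),
    card_fiber_third_eq_succ_second (by omega) (by omega)]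
  congr 1
  refine Finset.sum_congr rfl fun ℓ hℓ ↦ ?_
  rw [Finset.mem_Icc] at hℓ
  exact card_fiber_third_eq_of_lt (by omega) hij (by omega)
end

section
/- Let a_n(i,j) be the number of permutations of [n] avoiding {1243, 1324} with first letter i and second letter j. Then for 1 ≤ i ≤ n-1, a_n(i,n) = Σ_{j ≠ i} a_{n-1}(i,j), i.e., it equals the total number of {1243,1324}-avoiding permutations of [n-1] with first letter i. -/
section Aux

variable {m : ℕ}

/-- Position embedding: skips position 1. -/
def pe (m : ℕ) (k : Fin (m + 1)) : Fin (m + 2) :=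
  if (k : ℕ) = 0 then ⟨0, by omega⟩ else ⟨(k : ℕ) + 1, by omega⟩

/-- Partial inverse of `pe` (on positions ≠ 1). -/
def pd (m : ℕ) (j : Fin (m + 2)) : Fin (m + 1) :=
  if (j : ℕ) = 0 then ⟨0, by omega⟩ else ⟨(j : ℕ) - 1, by omega⟩

lemma pe_val (k : Fin (m + 1)) : (pe m k : ℕ) = if (k : ℕ) = 0 then 0 else (k : ℕ) + 1 := by
  unfold pe; split <;> rfl

lemma pd_val (j : Fin (m + 2)) : (pd m j : ℕ) = if (j : ℕ) = 0 then 0 else (j : ℕ) - 1 := by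
  unfold pd; split <;> rfl

lemma pe_ne_one (k : Fin (m + 1)) : (pe m k : ℕ) ≠ 1 := by
  rw [pe_val]; split <;> omega

lemma pe_strictMono : StrictMono (pe m) := by
  intro a b hab
  rw [Fin.lt_def] at *
  rw [pe_val, pe_val]
  split_ifs <;> first | contradiction | omega

lemma pd_pe (k : Fin (m + 1)) : pd m (pe m k) = k := by
  apply Fin.ext
  have := k.isLt
  rw [pd_val, pe_val]
  split_ifs <;> first | contradiction | omega

lemma pe_pd (j : Fin (m + 2)) (hj : (j : ℕ) ≠ 1) : pe m (pd m j) = j := by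
  apply Fin.ext
  have := j.isLt
  rw [pe_val, pd_val]
  split_ifs <;> first | contradiction | omega

/-- Insert the value `m+1` at position 1. -/
def usFun (σ : Equiv.Perm (Fin (m + 1))) (j : Fin (m + 2)) : Fin (m + 2) :=
  if (j : ℕ) = 1 then ⟨m + 1, by omega⟩
  else ⟨(σ (pd m j) : ℕ), by have := (σ (pd m j)).isLt; omega⟩

lemma usFun_val (σ : Equiv.Perm (Fin (m + 1))) (j : Fin (m + 2)) :
    (usFun σ j : ℕ) = if (j : ℕ) = 1 then m + 1 else (σ (pd m j) : ℕ) := by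
  unfold usFun; split <;> rfl

lemma usFun_inj (σ : Equiv.Perm (Fin (m + 1))) : Function.Injective (usFun σ) := by
  intro x y hxy
  have h := congrArg Fin.val hxy
  rw [usFun_val, usFun_val] at h
  by_cases h1 : (x : ℕ) = 1 <;> by_cases h2 : (y : ℕ) = 1
  · exact Fin.ext (h1.trans h2.symm)
  · rw [if_pos h1, if_neg h2] at h
    exact absurd h (by have := (σ (pd m y)).isLt; omega)
  · rw [if_neg h1, if_pos h2] at h
    exact absurd h (by have := (σ (pd m x)).isLt; omega)
  · rw [if_neg h1, if_neg h2] at h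
    have h3 : pd m x = pd m y := σ.injective (Fin.ext h)
    rw [← pe_pd x h1, ← pe_pd y h2, h3]

noncomputable def us (σ : Equiv.Perm (Fin (m + 1))) : Equiv.Perm (Fin (m + 2)) :=
  Equiv.ofBijective (usFun σ) (Finite.injective_iff_bijective.mp (usFun_inj σ))

lemma us_val (σ : Equiv.Perm (Fin (m + 1))) (j : Fin (m + 2)) :
    (us σ j : ℕ) = if (j : ℕ) = 1 then m + 1 else (σ (pd m j) : ℕ) := usFun_val σ j

lemma us_pe (σ : Equiv.Perm (Fin (m + 1))) (k : Fin (m + 1)) :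
    (us σ (pe m k) : ℕ) = (σ k : ℕ) := by
  rw [us_val, if_neg (pe_ne_one k), pd_pe]

lemma us_inj : Function.Injective (us (m := m)) := by
  intro σ σ' h
  refine Equiv.ext fun k => Fin.ext ?_
  rw [← us_pe σ k, h, us_pe]

lemma firstIs_us_iff (σ : Equiv.Perm (Fin (m + 1))) (i : ℕ) :
    FirstIs (us σ) i ↔ FirstIs σ i := by
  constructor
  · intro h k hk
    have h0 : ((pe m k : Fin (m + 2)) : ℕ) = 0 := by rw [pe_val, if_pos hk]
    have := h (pe m k) h0
    rwa [us_pe] at this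
  · intro h j hj
    rw [us_val, if_neg (by omega)]
    exact h _ (by rw [pd_val, if_pos hj])

lemma secondIs_us (σ : Equiv.Perm (Fin (m + 1))) : SecondIs (us σ) (m + 2) := by
  intro j hj
  rw [us_val, if_pos hj]

lemma contains_us_iff (σ : Equiv.Perm (Fin (m + 1))) (p : Fin 4 → ℕ)
    (hp0 : ∃ b, p 0 < p b) (hp1 : ∃ b, p 1 < p b) :
    ContainsPat (us σ) p ↔ ContainsPat σ p := by
  constructor
  · rintro ⟨f, hf, hiff⟩
    have hne : ∀ x : Fin 4, (f x : ℕ) ≠ 1 := by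
      intro x hx
      have hmax : (us σ (f x) : ℕ) = m + 1 := by rw [us_val, if_pos hx]
      have hlead : ∀ b : Fin 4, p x < p b → False := by
        intro b hb
        have h := (hiff x b).mp hb
        rw [Fin.lt_def, hmax] at h
        have := (us σ (f b)).isLt
        omega
      rcases Nat.lt_or_ge (x : ℕ) 2 with hlt | hge
      · by_cases h0 : (x : ℕ) = 0
        · have hx0 : x = 0 := Fin.ext h0
          subst hx0
          obtain ⟨b, hb⟩ := hp0
          exact hlead b hb
        · have hx1 : x = 1 := Fin.ext (by omega)
          subst hx1
          obtain ⟨b, hb⟩ := hp1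
          exact hlead b hb
      · have h1x : (f 1 : ℕ) < (f x : ℕ) := by
          refine Fin.lt_def.mp (hf ?_)
          rw [Fin.lt_def]
          have : ((1 : Fin 4) : ℕ) = 1 := rfl
          omega
        have h01 : (f 0 : ℕ) < (f 1 : ℕ) := Fin.lt_def.mp (hf (by decide))
        omega
    refine ⟨fun x => pd m (f x), ?_, ?_⟩
    · intro x y hxy
      have h := Fin.lt_def.mp (hf hxy)
      have hnx := hne x
      have hny := hne y
      rw [Fin.lt_def, pd_val, pd_val]
      split_ifs <;> first | contradiction | omega
    · intro x y
      rw [hiff x y]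
      simp only [Fin.lt_def]
      have ex : (us σ (f x) : ℕ) = (σ (pd m (f x)) : ℕ) := by rw [us_val, if_neg (hne x)]
      have ey : (us σ (f y) : ℕ) = (σ (pd m (f y)) : ℕ) := by rw [us_val, if_neg (hne y)]
      rw [ex, ey]
  · rintro ⟨f, hf, hiff⟩
    refine ⟨fun x => pe m (f x), fun x y hxy => pe_strictMono (hf hxy), fun x y => ?_⟩
    rw [hiff x y]
    simp only [Fin.lt_def]
    rw [us_pe, us_pe]

end Aux

theorem stmt_12 :
    ∀ n i, 1 ≤ i → i ≤ n - 1 →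
      a n i n = Nat.card {π : Equiv.Perm (Fin (n - 1)) //
        ¬ ContainsPat π ![1, 2, 4, 3] ∧ ¬ ContainsPat π ![1, 3, 2, 4] ∧ FirstIs π i} := by
  intro n i h1 h2
  obtain ⟨m, rfl⟩ : ∃ m, n = m + 2 := ⟨n - 2, by omega⟩
  clear h1 h2
  unfold a
  show _ = Nat.card {π : Equiv.Perm (Fin (m + 1)) //
    ¬ ContainsPat π ![1, 2, 4, 3] ∧ ¬ ContainsPat π ![1, 3, 2, 4] ∧ FirstIs π i}
  refine Nat.card_congr (Equiv.symm (Equiv.ofBijective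
    (fun σ => ⟨us σ.1,
      fun hc => σ.2.1 ((contains_us_iff _ _ ⟨1, by decide⟩ ⟨2, by decide⟩).mp hc),
      fun hc => σ.2.2.1 ((contains_us_iff _ _ ⟨1, by decide⟩ ⟨3, by decide⟩).mp hc),
      (firstIs_us_iff _ i).mpr σ.2.2.2,
      secondIs_us _⟩)
    ⟨?_, ?_⟩))
  · intro σ σ' h
    exact Subtype.ext (us_inj (congrArg Subtype.val h))
  · rintro ⟨π, hc1, hc2, hfi, hsec⟩
    have hπ1 : (π ⟨1, by omega⟩ : ℕ) = m + 1 := by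
      have := hsec ⟨1, by omega⟩ rfl; omega
    have hlt : ∀ k : Fin (m + 1), (π (pe m k) : ℕ) < m + 1 := by
      intro k
      have hne : π (pe m k) ≠ π ⟨1, by omega⟩ := by
        intro h
        exact pe_ne_one k (congrArg Fin.val (π.injective h))
      have h2 := (π (pe m k)).isLt
      have h3 : (π (pe m k) : ℕ) ≠ m + 1 := by
        rw [← hπ1]; exact fun h => hne (Fin.ext h)
      omega
    set σf : Fin (m + 1) → Fin (m + 1) := fun k => ⟨(π (pe m k) : ℕ), hlt k⟩ with hσf
    have hinj : Function.Injective σf := by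
      intro x y hxy
      have h0 := congrArg Fin.val hxy
      have h1 : (π (pe m x) : ℕ) = (π (pe m y) : ℕ) := h0
      exact pe_strictMono.injective (π.injective (Fin.ext h1))
    set σ := Equiv.ofBijective σf (Finite.injective_iff_bijective.mp hinj) with hσ
    have husπ : us σ = π := by
      refine Equiv.ext fun j => Fin.ext ?_
      rw [us_val]
      by_cases hj : (j : ℕ) = 1
      · rw [if_pos hj]
        have hj' : j = ⟨1, by omega⟩ := Fin.ext hj
        rw [hj', hπ1]
      · rw [if_neg hj]
        show (π (pe m (pd m j)) : ℕ) = (π j : ℕ)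
        rw [pe_pd j hj]
    refine ⟨⟨σ, ?_, ?_, ?_⟩, ?_⟩
    · intro hc
      apply hc1
      rw [← husπ]
      exact (contains_us_iff _ _ ⟨1, by decide⟩ ⟨2, by decide⟩).mpr hc
    · intro hc
      apply hc2
      rw [← husπ]
      exact (contains_us_iff _ _ ⟨1, by decide⟩ ⟨3, by decide⟩).mpr hc
    · rw [← husπ] at hfi
      exact (firstIs_us_iff σ i).mp hfi
    · exact Subtype.ext husπ
end
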